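/- In the braid group B_{2n}, the elements t_1 = σ_n and t_i = σ_{n+i-1}·σ_{n-i+1} (for 2 ≤ i ≤ n) satisfy the type B braid relations: t_1t_2t_1t_2 = t_2t_1t_2t_1, t_it_{i+1}t_i = t_{i+1}t_it_{i+1} for 2 ≤ i ≤ n−1, and t_it_j = t_jt_i for |i−j| > 1. -/

import Mathlib

/-!
Each `t_i` with `i ≥ 2` is a product of two generators placed symmetrically about
`t_1 = σ_n`. Far-apart `t_i` therefore commute factor by factor; adjacent `t_i, t_{i+1}`
braid because their left factors and their right factors form two mutually commuting
braiding pairs; and the four-term relation between `σ_n` and `σ_{n+1} σ_{n-1}` follows from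
the braid relations of `σ_n` with `σ_{n ± 1}` and the commutation of `σ_{n-1}` with `σ_{n+1}`.
-/

/-- Braid relations on `m` generators `σ_1,…,σ_m` (generator `i : Fin m` is `σ_{i+1}`). -/
def braidRels (m : ℕ) : Set (FreeGroup (Fin m)) :=
  {r | (∃ i j : Fin m, (i : ℕ) + 1 = (j : ℕ) ∧
      r = .of i * .of j * .of i * (.of j * .of i * .of j)⁻¹) ∨
    (∃ i j : Fin m, (i : ℕ) + 2 ≤ (j : ℕ) ∧
      r = .of i * .of j * (.of j * .of i)⁻¹)}

/-- The braid group on `m+1` strands, with `m` Artin generators. -/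
abbrev BraidGroup (m : ℕ) := PresentedGroup (braidRels m)

/-- The Artin generator `σ_k` (`1 ≤ k ≤ m`) of the braid group. -/
noncomputable def σ {m : ℕ} (k : ℕ) : BraidGroup m :=
  if h : 1 ≤ k ∧ k ≤ m then PresentedGroup.of (⟨k - 1, by omega⟩ : Fin m) else 1

/-- Type `B_n` Artin relations on generators `s_1,…,s_n` (generator `i : Fin n` is `s_{i+1}`). -/
def typeBRels (n : ℕ) : Set (FreeGroup (Fin n)) :=
  {r | (∃ i j : Fin n, (i : ℕ) = 0 ∧ (j : ℕ) = 1 ∧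
      r = .of i * .of j * .of i * .of j * (.of j * .of i * .of j * .of i)⁻¹) ∨
    (∃ i j : Fin n, 1 ≤ (i : ℕ) ∧ (i : ℕ) + 1 = (j : ℕ) ∧
      r = .of i * .of j * .of i * (.of j * .of i * .of j)⁻¹) ∨
    (∃ i j : Fin n, (i : ℕ) + 2 ≤ (j : ℕ) ∧
      r = .of i * .of j * (.of j * .of i)⁻¹)}

/-- The Artin group of type `B_n`. -/
abbrev ArtinB (n : ℕ) := PresentedGroup (typeBRels n)

/-- The standard generator `s_k` (`1 ≤ k ≤ n`) of `A(B_n)`. -/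
noncomputable def s {n : ℕ} (k : ℕ) : ArtinB n :=
  if h : 1 ≤ k ∧ k ≤ n then PresentedGroup.of (⟨k - 1, by omega⟩ : Fin n) else 1

section BraidWords

variable {G : Type*} [Group G]

theorem mul_mul_mul_eq_of_commute {a b x y : G} (hax : Commute a x) (hay : Commute a y)
    (hbx : Commute b x) : a * x * (b * y) * (a * x) = a * b * a * (x * y * x) := by
  simp only [mul_assoc]
  rw [hbx.symm.left_comm, hay.symm.left_comm, hax.symm.left_comm]

theorem mul_braid_of_commute {a b x y : G} (hab : a * b * a = b * a * b)
    (hxy : x * y * x = y * x * y) (hax : Commute a x) (hay : Commute a y)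
    (hbx : Commute b x) (hby : Commute b y) :
    a * x * (b * y) * (a * x) = b * y * (a * x) * (b * y) := by
  rw [mul_mul_mul_eq_of_commute hax hay hbx, mul_mul_mul_eq_of_commute hby hbx hay, hab, hxy]

theorem braid_four_of_braid_of_commute {a b c : G} (hab : a * b * a = b * a * b)
    (hbc : b * c * b = c * b * c) (hac : Commute a c) :
    b * (c * a) * b * (c * a) = c * a * b * (c * a) * b :=
  calc b * (c * a) * b * (c * a)
      = b * c * (a * b * a) * c := by simp only [mul_assoc, hac.eq]
    _ = b * c * b * a * b * c := by rw [hab]; simp only [mul_assoc]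
    _ = c * b * (c * a) * b * c := by rw [hbc]; simp only [mul_assoc]
    _ = c * b * a * (c * b * c) := by rw [← hac.eq]; simp only [mul_assoc]
    _ = c * (a * b * a) * c * b := by rw [hab, ← hbc]; simp only [mul_assoc]
    _ = c * a * b * (c * a) * b := by simp only [mul_assoc, hac.eq]

end BraidWords

theorem braidGroup_of_braid {m : ℕ} {i j : Fin m} (h : (i : ℕ) + 1 = j) :
    (.of i * .of j * .of i : BraidGroup m) = .of j * .of i * .of j :=
  PresentedGroup.mk_eq_mk_of_mul_inv_mem (Or.inl ⟨i, j, h, rfl⟩)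

theorem braidGroup_of_commute {m : ℕ} {i j : Fin m} (h : (i : ℕ) + 2 ≤ j) :
    Commute (.of i : BraidGroup m) (.of j) :=
  PresentedGroup.mk_eq_mk_of_mul_inv_mem (Or.inr ⟨i, j, h, rfl⟩)

theorem σ_braid {m k l : ℕ} (hk : 1 ≤ k) (hkl : k + 1 = l) (hlm : l ≤ m) :
    (σ k * σ l * σ k : BraidGroup m) = σ l * σ k * σ l := by
  rw [σ, σ, dif_pos ⟨hk, by omega⟩, dif_pos ⟨by omega, hlm⟩]
  exact braidGroup_of_braid (by simp only; omega)

-- Out of range `σ k = 1`, so no bounds on `k, l` are needed.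
theorem σ_commute {m k l : ℕ} (hkl : k + 2 ≤ l) : Commute (σ k : BraidGroup m) (σ l) := by
  unfold σ
  split_ifs with hk hl
  · exact braidGroup_of_commute (by simp only; omega)
  all_goals simp

theorem stmt_1_general (n : ℕ) (t : ℕ → BraidGroup (2 * n))
    (ht1 : t 1 = σ n)
    (hti : ∀ i : ℕ, 2 ≤ i → i ≤ n → t i = σ (n + i - 1) * σ (n - i + 1)) :
    (2 ≤ n → t 1 * t 2 * t 1 * t 2 = t 2 * t 1 * t 2 * t 1) ∧
    (∀ i : ℕ, 2 ≤ i → i ≤ n - 1 →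
      t i * t (i + 1) * t i = t (i + 1) * t i * t (i + 1)) ∧
    (∀ i j : ℕ, 1 ≤ i → i ≤ n → 1 ≤ j → j ≤ n → i + 2 ≤ j →
      t i * t j = t j * t i) := by
  refine ⟨fun h2n => ?_, fun i h2i hin => ?_, fun i j h1i hin _ hjn hij => ?_⟩
  · rw [ht1, hti 2 le_rfl h2n]
    exact braid_four_of_braid_of_commute (σ_braid (by omega) (by omega) (by omega))
      (σ_braid (by omega) rfl (by omega)) (σ_commute (by omega))
  · rw [hti i h2i (by omega), hti (i + 1) (by omega) (by omega)]
    exact mul_braid_of_commute (σ_braid (by omega) (by omega) (by omega))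
      (σ_braid (by omega) (by omega) (by omega)).symm (σ_commute (by omega)).symm
      (σ_commute (by omega)).symm (σ_commute (by omega)).symm (σ_commute (by omega)).symm
  · rw [hti j (by omega) hjn]
    rcases h1i.eq_or_lt with rfl | h2i
    · rw [ht1]
      exact ((σ_commute (by omega)).mul_right (σ_commute (by omega)).symm).eq
    · rw [hti i h2i hin]
      exact (((σ_commute (by omega)).mul_right (σ_commute (by omega)).symm).mul_left
        ((σ_commute (by omega)).mul_right (σ_commute (by omega)).symm)).eq

/-- In `B_{2n}`, the elements `t_1 = σ_n`, `t_i = σ_{n+i-1} σ_{n-i+1}` satisfy the type `B`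
braid relations. -/
theorem stmt_1 (n : ℕ) (hn : 1 ≤ n) (t : ℕ → BraidGroup (2 * n))
    (ht1 : t 1 = σ n)
    (hti : ∀ i : ℕ, 2 ≤ i → i ≤ n → t i = σ (n + i - 1) * σ (n - i + 1)) :
    (2 ≤ n → t 1 * t 2 * t 1 * t 2 = t 2 * t 1 * t 2 * t 1) ∧
    (∀ i : ℕ, 2 ≤ i → i ≤ n - 1 →
      t i * t (i + 1) * t i = t (i + 1) * t i * t (i + 1)) ∧
    (∀ i j : ℕ, 1 ≤ i → i ≤ n → 1 ≤ j → j ≤ n → i + 2 ≤ j →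
      t i * t j = t j * t i) :=
  stmt_1_general n t ht1 hti
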